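/- On ℝ³, the second-order operator on symmetric trace-free 2-tensors defined by σ_{ab} = D_{(a}D^c ψ_{b)c} - (1/2)Δψ_{ab} - (1/4)g_{ab}D^c D^d ψ_{cd}, followed by ℛ(ψ)_{ab} = ε^{cd}{}_a D_{[c}σ_{d]b} (the linearised Cotton–York operator), satisfies div(ℛ(ψ)) = 0 for every smooth symmetric trace-free 2-tensor ψ, where (div t)_a = 2 g^{bc} D_c t_{ab}. -/

import Mathlib

noncomputable section

abbrev E3 := EuclideanSpace ℝ (Fin 3)

/-- Partial derivative (the flat connection `D` in Cartesian coordinates). -/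
noncomputable def pd (i : Fin 3) (f : E3 → ℝ) (x : E3) : ℝ :=
  fderiv ℝ f x (EuclideanSpace.single i 1)

/-- The Levi-Civita symbol `ε_{cda}` on ℝ³. -/
noncomputable def levi (c d a : Fin 3) : ℝ :=
  (Matrix.of ![(Pi.single c (1 : ℝ) : Fin 3 → ℝ), Pi.single d 1, Pi.single a 1]).det

/-- The Euclidean metric `g_{ab} = δ_{ab}`. -/
def gmet (a b : Fin 3) : ℝ := if a = b then 1 else 0

/-- `σ_{ab} = D_{(a}D^c ψ_{b)c} - (1/2) Δ ψ_{ab} - (1/4) g_{ab} D^c D^d ψ_{cd}`. -/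
noncomputable def sigmaT (ψ : E3 → Fin 3 → Fin 3 → ℝ) (x : E3) (a b : Fin 3) : ℝ :=
  (1 / 2) * ((∑ c, pd a (fun y => pd c (fun z => ψ z b c) y) x)
      + ∑ c, pd b (fun y => pd c (fun z => ψ z a c) y) x)
    - (1 / 2) * ∑ c, pd c (fun y => pd c (fun z => ψ z a b) y) x
    - (1 / 4) * gmet a b * ∑ c, ∑ d, pd c (fun y => pd d (fun z => ψ z c d) y) x

/-- The linearised Cotton–York operator `ℛ(ψ)_{ab} = ε^{cd}{}_a D_{[c}σ_{d]b}`. -/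
noncomputable def cottonYork (ψ : E3 → Fin 3 → Fin 3 → ℝ) (x : E3) (a b : Fin 3) : ℝ :=
  ∑ c, ∑ d, levi c d a *
    ((1 / 2) * (pd c (fun y => sigmaT ψ y d b) x - pd d (fun y => sigmaT ψ y c b) x))

/-! ### Auxiliary lemmas about `pd` -/

lemma sm_pd {f : E3 → ℝ} (hf : ContDiff ℝ (⊤ : ℕ∞) f) (i : Fin 3) :
    ContDiff ℝ (⊤ : ℕ∞) (pd i f) :=
  (hf.fderiv_right (by simp)).clm_apply contDiff_const

lemma dAt {f : E3 → ℝ} (hf : ContDiff ℝ (⊤ : ℕ∞) f) (y : E3) : DifferentiableAt ℝ f y :=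
  hf.differentiable (by simp) y

lemma pd_add {f g : E3 → ℝ} {x : E3} (hf : DifferentiableAt ℝ f x)
    (hg : DifferentiableAt ℝ g x) (i : Fin 3) :
    pd i (fun y => f y + g y) x = pd i f x + pd i g x := by
  simp [pd, fderiv_fun_add hf hg]

lemma pd_sub {f g : E3 → ℝ} {x : E3} (hf : DifferentiableAt ℝ f x)
    (hg : DifferentiableAt ℝ g x) (i : Fin 3) :
    pd i (fun y => f y - g y) x = pd i f x - pd i g x := by
  simp [pd, fderiv_fun_sub hf hg]

lemma pd_const_mul {f : E3 → ℝ} {x : E3} (hf : DifferentiableAt ℝ f x) (c : ℝ) (i : Fin 3) :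
    pd i (fun y => c * f y) x = c * pd i f x := by
  simp [pd, fderiv_const_mul hf c]

lemma pd_sum {α : Type*} {s : Finset α} {f : α → E3 → ℝ} {x : E3}
    (hf : ∀ a ∈ s, DifferentiableAt ℝ (f a) x) (i : Fin 3) :
    pd i (fun y => ∑ a ∈ s, f a y) x = ∑ a ∈ s, pd i (f a) x := by
  simp [pd, fderiv_fun_sum hf]

lemma pd_snd {f : E3 → ℝ} (hf : ContDiff ℝ (⊤ : ℕ∞) f) (i j : Fin 3) (x : E3) :
    pd i (pd j f) x = fderiv ℝ (fderiv ℝ f) x (EuclideanSpace.single i 1)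
      (EuclideanSpace.single j 1) := by
  have hd : DifferentiableAt ℝ (fderiv ℝ f) x :=
    ((hf.fderiv_right (m := (⊤ : ℕ∞)) (by simp)).differentiable (by simp)) x
  show fderiv ℝ (fun y => fderiv ℝ f y (EuclideanSpace.single j 1)) x
      (EuclideanSpace.single i 1) = _
  rw [fderiv_clm_apply hd (differentiableAt_const _)]
  simp

lemma pd_comm {f : E3 → ℝ} (hf : ContDiff ℝ (⊤ : ℕ∞) f) (i j : Fin 3) (x : E3) :
    pd i (pd j f) x = pd j (pd i f) x := by
  rw [pd_snd hf, pd_snd hf]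
  exact hf.contDiffAt.isSymmSndFDerivAt
    (by rw [minSmoothness_of_isRCLikeNormedField]; exact WithTop.coe_le_coe.mpr le_top) _ _

lemma pd_comb {A B C Z : E3 → ℝ} {z : E3} (hA : ContDiff ℝ (⊤ : ℕ∞) A) (hB : ContDiff ℝ (⊤ : ℕ∞) B)
    (hC : ContDiff ℝ (⊤ : ℕ∞) C) (hZ : ContDiff ℝ (⊤ : ℕ∞) Z) (r s t : ℝ) (c : Fin 3) :
    pd c (fun y => r * (A y + B y) - s * C y - t * Z y) z
      = r * (pd c A z + pd c B z) - s * pd c C z - t * pd c Z z := by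
  have h1 : ContDiff ℝ (⊤ : ℕ∞) (fun y => r * (A y + B y)) := contDiff_const.mul (hA.add hB)
  have h2 : ContDiff ℝ (⊤ : ℕ∞) (fun y => s * C y) := contDiff_const.mul hC
  have h3 : ContDiff ℝ (⊤ : ℕ∞) (fun y => t * Z y) := contDiff_const.mul hZ
  calc pd c (fun y => r * (A y + B y) - s * C y - t * Z y) z
      = pd c (fun y => r * (A y + B y) - s * C y) z - pd c (fun y => t * Z y) z :=
        pd_sub (dAt (h1.sub h2) z) (dAt h3 z) c
    _ = (pd c (fun y => r * (A y + B y)) z - pd c (fun y => s * C y) z)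
          - pd c (fun y => t * Z y) z := by
        rw [pd_sub (dAt h1 z) (dAt h2 z) c]
    _ = r * pd c (fun y => A y + B y) z - s * pd c C z - t * pd c Z z := by
        rw [pd_const_mul (dAt (hA.add hB) z) r c, pd_const_mul (dAt hC z) s c,
          pd_const_mul (dAt hZ z) t c]
    _ = r * (pd c A z + pd c B z) - s * pd c C z - t * pd c Z z := by
        rw [pd_add (dAt hA z) (dAt hB z) c]

lemma pd_sum2_comb {G H : Fin 3 → Fin 3 → E3 → ℝ} (hG : ∀ d e, ContDiff ℝ (⊤ : ℕ∞) (G d e))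
    (hH : ∀ d e, ContDiff ℝ (⊤ : ℕ∞) (H d e)) (k : Fin 3 → Fin 3 → ℝ) (c : Fin 3) (x : E3) :
    pd c (fun y => ∑ d, ∑ e, k d e * ((1 / 2) * (G d e y - H d e y))) x
      = ∑ d, ∑ e, k d e * ((1 / 2) * (pd c (G d e) x - pd c (H d e) x)) := by
  have hsm : ∀ d e, ContDiff ℝ (⊤ : ℕ∞) (fun y => k d e * ((1 / 2) * (G d e y - H d e y))) :=
    fun d e => contDiff_const.mul (contDiff_const.mul ((hG d e).sub (hH d e)))
  calc pd c (fun y => ∑ d, ∑ e, k d e * ((1 / 2) * (G d e y - H d e y))) x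
      = ∑ d, pd c (fun y => ∑ e, k d e * ((1 / 2) * (G d e y - H d e y))) x :=
        pd_sum (fun d _ => dAt (ContDiff.sum fun e _ => hsm d e) x) c
    _ = ∑ d, ∑ e, pd c (fun y => k d e * ((1 / 2) * (G d e y - H d e y))) x :=
        Finset.sum_congr rfl fun d _ => pd_sum (fun e _ => dAt (hsm d e) x) c
    _ = ∑ d, ∑ e, k d e * ((1 / 2) * (pd c (G d e) x - pd c (H d e) x)) := by
        refine Finset.sum_congr rfl fun d _ => Finset.sum_congr rfl fun e _ => ?_
        calc pd c (fun y => k d e * ((1 / 2) * (G d e y - H d e y))) x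
            = k d e * pd c (fun y => (1 / 2) * (G d e y - H d e y)) x :=
              pd_const_mul (dAt (contDiff_const.mul ((hG d e).sub (hH d e))) x) (k d e) c
          _ = k d e * ((1 / 2) * pd c (fun y => G d e y - H d e y) x) := by
              rw [pd_const_mul (dAt ((hG d e).sub (hH d e)) x) (1 / 2) c]
          _ = k d e * ((1 / 2) * (pd c (G d e) x - pd c (H d e) x)) := by
              rw [pd_sub (dAt (hG d e) x) (dAt (hH d e) x) c]

/-- `F = D^c D^d ψ_{cd}`. -/
noncomputable def Fdd (ψ : E3 → Fin 3 → Fin 3 → ℝ) : E3 → ℝ :=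
  fun y => ∑ c, ∑ d, pd c (pd d (fun w => ψ w c d)) y

/-- the linearised Cotton–York tensor of any smooth symmetric
trace-free 2-tensor on flat ℝ³ is divergence free, with
`(div t)_a = 2 g^{bc} D_c t_{ab}`. -/
theorem stmt13 (ψ : E3 → Fin 3 → Fin 3 → ℝ)
    (hsmooth : ∀ a b, ContDiff ℝ (⊤ : ℕ∞) (fun x => ψ x a b))
    (hsym : ∀ x a b, ψ x a b = ψ x b a)
    (htracefree : ∀ x, ∑ a, ψ x a a = 0) :
    ∀ x a, (2 : ℝ) * ∑ c, pd c (fun y => cottonYork ψ y a c) x = 0 := by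
  intro x a
  have hFsm : ContDiff ℝ (⊤ : ℕ∞) (Fdd ψ) :=
    ContDiff.sum fun c _ => ContDiff.sum fun d _ => sm_pd (sm_pd (hsmooth c d) d) c
  -- smoothness of σ
  have hσ : ∀ d b, ContDiff ℝ (⊤ : ℕ∞) (fun y => sigmaT ψ y d b) := by
    intro d b
    have h1 : ContDiff ℝ (⊤ : ℕ∞) (fun y => ∑ c, pd d (pd c (fun w => ψ w b c)) y) :=
      ContDiff.sum fun c _ => sm_pd (sm_pd (hsmooth b c) c) d
    have h2 : ContDiff ℝ (⊤ : ℕ∞) (fun y => ∑ c, pd b (pd c (fun w => ψ w d c)) y) :=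
      ContDiff.sum fun c _ => sm_pd (sm_pd (hsmooth d c) c) b
    have h3 : ContDiff ℝ (⊤ : ℕ∞) (fun y => ∑ c, pd c (pd c (fun w => ψ w d b)) y) :=
      ContDiff.sum fun c _ => sm_pd (sm_pd (hsmooth d b) c) c
    exact ((contDiff_const.mul (h1.add h2)).sub (contDiff_const.mul h3)).sub
      (contDiff_const.mul hFsm)
  -- divergence of σ
  have hdiv : ∀ e z, ∑ c, pd c (fun y => sigmaT ψ y e c) z
      = (1 / 4) * pd e (Fdd ψ) z := by
    intro e z
    have expand : ∀ c, pd c (fun y => sigmaT ψ y e c) z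
        = (1 / 2) * ((∑ d, pd c (pd e (pd d (fun w => ψ w c d))) z)
              + ∑ d, pd c (pd c (pd d (fun w => ψ w e d))) z)
          - (1 / 2) * ∑ d, pd c (pd d (pd d (fun w => ψ w e c))) z
          - ((1 / 4) * gmet e c) * pd c (Fdd ψ) z := by
      intro c
      have hA : ContDiff ℝ (⊤ : ℕ∞) (fun y => ∑ d, pd e (pd d (fun w => ψ w c d)) y) :=
        ContDiff.sum fun d _ => sm_pd (sm_pd (hsmooth c d) d) e
      have hB : ContDiff ℝ (⊤ : ℕ∞) (fun y => ∑ d, pd c (pd d (fun w => ψ w e d)) y) :=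
        ContDiff.sum fun d _ => sm_pd (sm_pd (hsmooth e d) d) c
      have hC : ContDiff ℝ (⊤ : ℕ∞) (fun y => ∑ d, pd d (pd d (fun w => ψ w e c)) y) :=
        ContDiff.sum fun d _ => sm_pd (sm_pd (hsmooth e c) d) d
      have e1 : pd c (fun y => sigmaT ψ y e c) z
          = (1 / 2) * (pd c (fun y => ∑ d, pd e (pd d (fun w => ψ w c d)) y) z
                + pd c (fun y => ∑ d, pd c (pd d (fun w => ψ w e d)) y) z)
            - (1 / 2) * pd c (fun y => ∑ d, pd d (pd d (fun w => ψ w e c)) y) z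
            - ((1 / 4) * gmet e c) * pd c (Fdd ψ) z :=
        pd_comb hA hB hC hFsm (1 / 2) (1 / 2) ((1 / 4) * gmet e c) c
      rw [e1, pd_sum (fun d _ => dAt (sm_pd (sm_pd (hsmooth c d) d) e) z) c,
        pd_sum (fun d _ => dAt (sm_pd (sm_pd (hsmooth e d) d) c) z) c,
        pd_sum (fun d _ => dAt (sm_pd (sm_pd (hsmooth e c) d) d) z) c]
    have hT1 : ∑ c, ∑ d, pd c (pd e (pd d (fun w => ψ w c d))) z = pd e (Fdd ψ) z := by
      calc ∑ c, ∑ d, pd c (pd e (pd d (fun w => ψ w c d))) z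
          = ∑ c, ∑ d, pd e (pd c (pd d (fun w => ψ w c d))) z :=
            Finset.sum_congr rfl fun c _ => Finset.sum_congr rfl fun d _ =>
              pd_comm (sm_pd (hsmooth c d) d) c e z
        _ = ∑ c, pd e (fun y => ∑ d, pd c (pd d (fun w => ψ w c d)) y) z :=
            Finset.sum_congr rfl fun c _ =>
              (pd_sum (fun d _ => dAt (sm_pd (sm_pd (hsmooth c d) d) c) z) e).symm
        _ = pd e (Fdd ψ) z :=
            (pd_sum (fun c _ => dAt
              (ContDiff.sum fun d _ => sm_pd (sm_pd (hsmooth c d) d) c) z) e).symm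
    have hT3 : ∑ c, ∑ d, pd c (pd d (pd d (fun w => ψ w e c))) z
        = ∑ c, ∑ d, pd c (pd c (pd d (fun w => ψ w e d))) z := by
      calc ∑ c, ∑ d, pd c (pd d (pd d (fun w => ψ w e c))) z
          = ∑ c, ∑ d, pd d (pd d (pd c (fun w => ψ w e c))) z := by
            refine Finset.sum_congr rfl fun c _ => Finset.sum_congr rfl fun d _ => ?_
            rw [pd_comm (sm_pd (hsmooth e c) d) c d z]
            congr 1
            funext w
            exact pd_comm (hsmooth e c) c d w
        _ = ∑ c, ∑ d, pd c (pd c (pd d (fun w => ψ w e d))) z := Finset.sum_comm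
    have hT4 : ∑ c, ((1 / 4 : ℝ) * gmet e c) * pd c (Fdd ψ) z
        = (1 / 4) * pd e (Fdd ψ) z := by
      have h : ∀ c, ((1 / 4 : ℝ) * gmet e c) * pd c (Fdd ψ) z
          = if e = c then (1 / 4) * pd c (Fdd ψ) z else 0 := by
        intro c; by_cases hec : e = c <;> simp [gmet, hec]
      rw [Finset.sum_congr rfl fun c _ => h c]
      simp
    rw [Finset.sum_congr rfl fun c _ => expand c, Finset.sum_sub_distrib,
      Finset.sum_sub_distrib, ← Finset.mul_sum, ← Finset.mul_sum,
      Finset.sum_add_distrib, hT1, hT3, hT4]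
    ring
  -- pushing one more derivative through the divergence identity
  have hsX : ∀ d e, ∑ c, pd c (pd d (fun y => sigmaT ψ y e c)) x
      = (1 / 4) * pd d (pd e (Fdd ψ)) x := by
    intro d e
    calc ∑ c, pd c (pd d (fun y => sigmaT ψ y e c)) x
        = ∑ c, pd d (pd c (fun y => sigmaT ψ y e c)) x :=
          Finset.sum_congr rfl fun c _ => pd_comm (hσ e c) c d x
      _ = pd d (fun y => ∑ c, pd c (fun w => sigmaT ψ w e c) y) x :=
          (pd_sum (fun c _ => dAt (sm_pd (hσ e c) c) x) d).symm
      _ = pd d (fun y => (1 / 4) * pd e (Fdd ψ) y) x := by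
          rw [show (fun y => ∑ c, pd c (fun w => sigmaT ψ w e c) y)
              = (fun y => (1 / 4) * pd e (Fdd ψ) y) from funext fun y => hdiv e y]
      _ = (1 / 4) * pd d (pd e (Fdd ψ)) x :=
          pd_const_mul (dAt (sm_pd hFsm e) x) (1 / 4) d
  -- each (d,e)-term of the divergence of the Cotton–York tensor vanishes
  have per : ∀ d e, ∑ c, levi d e a *
      ((1 / 2) * (pd c (pd d (fun y => sigmaT ψ y e c)) x
        - pd c (pd e (fun y => sigmaT ψ y d c)) x)) = 0 := by
    intro d e
    rw [← Finset.mul_sum, ← Finset.mul_sum, Finset.sum_sub_distrib, hsX d e, hsX e d,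
      pd_comm hFsm d e x]
    ring
  have key : ∀ c, pd c (fun y => cottonYork ψ y a c) x
      = ∑ d, ∑ e, levi d e a *
          ((1 / 2) * (pd c (pd d (fun y => sigmaT ψ y e c)) x
            - pd c (pd e (fun y => sigmaT ψ y d c)) x)) := by
    intro c
    exact pd_sum2_comb (G := fun d e => pd d (fun y => sigmaT ψ y e c))
      (H := fun d e => pd e (fun y => sigmaT ψ y d c))
      (fun d e => sm_pd (hσ e c) d) (fun d e => sm_pd (hσ d c) e)
      (fun d e => levi d e a) c x
  have main : ∑ c, pd c (fun y => cottonYork ψ y a c) x = 0 := by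
    calc ∑ c, pd c (fun y => cottonYork ψ y a c) x
        = ∑ c, ∑ d, ∑ e, levi d e a *
            ((1 / 2) * (pd c (pd d (fun y => sigmaT ψ y e c)) x
              - pd c (pd e (fun y => sigmaT ψ y d c)) x)) :=
          Finset.sum_congr rfl fun c _ => key c
      _ = ∑ d, ∑ c, ∑ e, levi d e a *
            ((1 / 2) * (pd c (pd d (fun y => sigmaT ψ y e c)) x
              - pd c (pd e (fun y => sigmaT ψ y d c)) x)) := Finset.sum_comm
      _ = ∑ d, ∑ e, ∑ c, levi d e a *
            ((1 / 2) * (pd c (pd d (fun y => sigmaT ψ y e c)) x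
              - pd c (pd e (fun y => sigmaT ψ y d c)) x)) :=
          Finset.sum_congr rfl fun d _ => Finset.sum_comm
      _ = 0 := by
          rw [Finset.sum_congr rfl fun d (_ : d ∈ Finset.univ) =>
            Finset.sum_congr rfl fun e _ => per d e]
          simp
  rw [main, mul_zero]
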